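/- arXiv:1609.04098 — 4 statements merged into one kernel-verified Lean document; each statement's English description precedes it below -/
import Mathlib

section
/- Let σ=(Σ_i)_{i∈[k]} be a trace alphabet, κ:[k]→ℕ∪{ω} a capacity function, and A, B two nondeterministic Büchi automata over Σ. If Duplicator has a winning strategy in the multi-buffer game G^κ_σ(A,B) (i.e. A ⊑^κ_σ B), then L(A) ⊆ [L(B)]_σ. -/
open Classical

noncomputable section

namespace MultiBuffer

/-! ### Nondeterministic Büchi automata -/

/-- A nondeterministic Büchi automaton over the alphabet `α`. -/
structure NBA (α : Type) : Type 1 where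
  Q : Type
  finQ : Fintype Q
  init : Q
  δ : Q → α → Set Q
  F : Set Q

variable {α P Q : Type} {k : ℕ}

/-- `r` is (the state sequence of) a run of `A` on the infinite word `w`. -/
def IsRun (A : NBA α) (w : ℕ → α) (r : ℕ → A.Q) : Prop :=
  r 0 = A.init ∧ ∀ n, r (n + 1) ∈ A.δ (r n) (w n)

/-- The state sequence `r` visits accepting states infinitely often. -/
def AcceptingStates (A : NBA α) (r : ℕ → A.Q) : Prop :=
  {n | r n ∈ A.F}.Infinite

/-- The ω-language of a Büchi automaton. -/
def Lang (A : NBA α) : Set (ℕ → α) :=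
  {w | ∃ r, IsRun A w r ∧ AcceptingStates A r}

/-! ### Finite or infinite words, projections and trace equivalence

A finite or infinite word over `α` is represented as a function `ℕ → Option α`
which is `none` from some point on (if finite); infinite words embed via `ofInf`. -/

/-- The infinite word `u` viewed as an element of `Σ^∞`. -/
def ofInf (u : ℕ → α) : ℕ → Option α := fun n => some (u n)

/-- A function `ℕ → Option α` represents a finite or infinite word if after the
first `none` everything is `none`. -/
def Stable (w : ℕ → Option α) : Prop := ∀ n, w n = none → w (n + 1) = none

/-- The number of `i < j` satisfying `p`. -/
def countBelow (p : ℕ → Prop) (j : ℕ) : ℕ := {i | i < j ∧ p i}.ncard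

/-- Position `j` of the word `w` carries a letter belonging to `S`. -/
def InS (S : Set α) (w : ℕ → Option α) (j : ℕ) : Prop := ∃ a ∈ S, w j = some a

/-- The projection `π_S(w)` of the word `w` to the subalphabet `S`: the word obtained
from `w` by deleting all letters not in `S`. -/
def proj (S : Set α) (w : ℕ → Option α) (n : ℕ) : Option α :=
  if h : ∃ j, InS S w j ∧ countBelow (InS S w) j = n then w h.choose else none

/-- Trace equivalence of (finite or infinite) words w.r.t. the trace alphabet
`σ = (Σ_i)_{i ∈ [k]}` : all projections coincide. -/
def TraceEquiv (σ : Fin k → Set α) (u v : ℕ → Option α) : Prop :=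
  ∀ i, proj (σ i) u = proj (σ i) v

/-- The trace closure of a language of infinite words. -/
def closure (σ : Fin k → Set α) (L : Set (ℕ → α)) : Set (ℕ → α) :=
  {v | ∃ u ∈ L, TraceEquiv σ (ofInf u) (ofInf v)}

/-! ### The multi-buffer game -/

/-- A configuration of the multi-buffer game: a state of Spoiler's automaton,
the contents of the `k` buffers, and a state of Duplicator's automaton. -/
structure Conf (α P Q : Type) (k : ℕ) where
  p : P
  bufs : Fin k → List α
  q : Q

/-- Appending the letter `a` to the back of every buffer `i` with `a ∈ σ i`. -/
def push (σ : Fin k → Set α) (bufs : Fin k → List α) (a : α) : Fin k → List α :=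
  fun i => if a ∈ σ i then bufs i ++ [a] else bufs i

/-- Popping the letter `b` from the front of every buffer `i` with `b ∈ σ i`. -/
def pop (σ : Fin k → Set α) (bufs : Fin k → List α) (b : α) : Fin k → List α :=
  fun i => if b ∈ σ i then (bufs i).tail else bufs i

/-- Effect of a Spoiler move `m = (a, p')` on a configuration. -/
def spApply (σ : Fin k → Set α) (c : Conf α P Q k) (m : α × P) : Conf α P Q k :=
  ⟨m.2, push σ c.bufs m.1, c.q⟩

/-- Effect of a (possibly empty) Duplicator move `d = (b₁,q₁)...(b_n,q_n)`. -/
def dupApply (σ : Fin k → Set α) (c : Conf α P Q k) (d : List (α × Q)) : Conf α P Q k :=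
  ⟨c.p, d.foldl (fun bs m => pop σ bs m.1) c.bufs, ((d.getLast?).map Prod.snd).getD c.q⟩

/-- Legality of a Spoiler move: it follows a transition of his automaton. -/
def SpLegal (δA : P → α → Set P) (c : Conf α P Q k) (m : α × P) : Prop :=
  m.2 ∈ δA c.p m.1

/-- Legality of a Duplicator move from a configuration: the moves form a run of her
automaton and each letter is removed from the front of the corresponding buffers. -/
def DupLegal (σ : Fin k → Set α) (δB : Q → α → Set Q) :
    Conf α P Q k → List (α × Q) → Prop
  | _, [] => True
  | c, m :: rest =>
      m.2 ∈ δB c.q m.1 ∧ (∀ i, m.1 ∈ σ i → (c.bufs i).head? = some m.1) ∧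
      DupLegal σ δB ⟨c.p, pop σ c.bufs m.1, m.2⟩ rest

/-- The capacity constraints (checked after a full round). -/
def CapOk (κ : Fin k → ℕ∞) (c : Conf α P Q k) : Prop :=
  ∀ i, ((c.bufs i).length : ℕ∞) ≤ κ i

/-- The list of the first `n` values of the sequence `s`. -/
def hist {β : Type} (s : ℕ → β) (n : ℕ) : List β := List.ofFn (fun i : Fin n => s i)

/-- The configuration of the play after `n` full rounds, when Spoiler plays the
sequence `s` of moves and Duplicator follows the strategy `θ` (which maps the
history of Spoiler moves, including the current one, to her response). -/
def playConf (σ : Fin k → Set α) (θ : List (α × P) → List (α × Q))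
    (c0 : Conf α P Q k) (s : ℕ → α × P) : ℕ → Conf α P Q k
  | 0 => c0
  | n + 1 => dupApply σ (spApply σ (playConf σ θ c0 s n) (s n)) (θ (hist s (n + 1)))

/-- Duplicator's response in round `n`. -/
def resp (θ : List (α × P) → List (α × Q)) (s : ℕ → α × P) (n : ℕ) : List (α × Q) :=
  θ (hist s (n + 1))

/-- Spoiler's move in round `n` is legal. -/
def SpLegalAt (σ : Fin k → Set α) (δA : P → α → Set P) (θ : List (α × P) → List (α × Q))
    (c0 : Conf α P Q k) (s : ℕ → α × P) (n : ℕ) : Prop :=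
  SpLegal δA (playConf σ θ c0 s n) (s n)

/-- Duplicator's response in round `n` is legal and the capacities are respected
after the round. -/
def DupOkAt (σ : Fin k → Set α) (κ : Fin k → ℕ∞) (δB : Q → α → Set Q)
    (θ : List (α × P) → List (α × Q)) (c0 : Conf α P Q k) (s : ℕ → α × P) (n : ℕ) : Prop :=
  DupLegal σ δB (spApply σ (playConf σ θ c0 s n) (s n)) (resp θ s n) ∧
  CapOk κ (playConf σ θ c0 s (n + 1))

/-- The number of occurrences of the letter `a` in Spoiler's word. -/
def spOcc (s : ℕ → α × P) (a : α) : ℕ∞ := {n | (s n).1 = a}.encard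

/-- The number of occurrences of the letter `a` in Duplicator's word. -/
def dupOcc (θ : List (α × P) → List (α × Q)) (s : ℕ → α × P) (a : α) : ℕ∞ :=
  {x : ℕ × ℕ | ∃ m, (resp θ s x.1)[x.2]? = some m ∧ m.1 = a}.encard

/-- Spoiler's run is accepting. -/
def SpAccept (FA : Set P) (s : ℕ → α × P) : Prop := {n | (s n).2 ∈ FA}.Infinite

/-- Duplicator's run is (infinite and) accepting. -/
def DupAccept (FB : Set Q) (θ : List (α × P) → List (α × Q)) (s : ℕ → α × P) : Prop :=
  {n | ∃ m ∈ resp θ s n, m.2 ∈ FB}.Infinite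

/-- Duplicator has a winning strategy in the multi-buffer game (with buffer alphabets
`σ`, capacities `κ`) played on the transition structures `δA`, `δB` with acceptance
sets `FA`, `FB`, starting from the configuration `c0`: she always has legal responses
(as long as Spoiler has played legally), and if the resulting infinite play carries an
accepting run of Spoiler then her own run is infinite and accepting and every letter
occurs equally often in both words (i.e. every letter put into a buffer is eventually
read). Finite plays in which a player is stuck are lost by that player. -/
def DupWinsFrom (σ : Fin k → Set α) (κ : Fin k → ℕ∞) (δA : P → α → Set P)
    (δB : Q → α → Set Q) (FA : Set P) (FB : Set Q) (c0 : Conf α P Q k) : Prop :=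
  ∃ θ : List (α × P) → List (α × Q),
    ∀ s : ℕ → α × P,
      (∀ n, (∀ m ≤ n, SpLegalAt σ δA θ c0 s m) → DupOkAt σ κ δB θ c0 s n) ∧
      ((∀ n, SpLegalAt σ δA θ c0 s n) → SpAccept FA s →
        DupAccept FB θ s ∧ ∀ a : α, spOcc s a = dupOcc θ s a)

/-- The multi-buffer simulation `A ⊑^κ_σ B`. -/
def Simu (σ : Fin k → Set α) (κ : Fin k → ℕ∞) (A B : NBA α) : Prop :=
  DupWinsFrom σ κ A.δ B.δ A.F B.F ⟨A.init, fun _ => [], B.init⟩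

/-!
Let Spoiler play an accepting run of `A` on `w` against a winning strategy of Duplicator.
Her moves, concatenated, form a run of `B` on a word `w'`. This word is infinite because some
letter occurs infinitely often in `w`, hence in `w'`, and the run is accepting because Duplicator
wins. Buffer `i` always holds the part of `π_i(w)` that Duplicator has not read yet, so every
prefix of `π_i(w')` is a prefix of `π_i(w)`. Conversely, every letter occurs equally often in `w`
and `w'`, so every prefix of `π_i(w)` is eventually reached by a prefix of `π_i(w')`. Hence
`π_i(w) = π_i(w')`.
-/

theorem hist_succ {β : Type} (s : ℕ → β) (n : ℕ) : hist s (n + 1) = hist s n ++ [s n] := by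
  simp only [hist, List.ofFn_succ', List.concat_eq_append, Fin.val_castSucc, Fin.val_last]

theorem hist_prefix {β : Type} (s : ℕ → β) {m n : ℕ} (h : m ≤ n) : hist s m <+: hist s n := by
  induction n, h using Nat.le_induction with
  | base => exact List.prefix_rfl
  | succ n _ ih => exact ih.trans ⟨[s n], (hist_succ s n).symm⟩

theorem hist_comp {β γ : Type} (f : β → γ) (s : ℕ → β) (n : ℕ) :
    hist (f ∘ s) n = (hist s n).map f := by
  simp [hist, List.map_ofFn, Function.comp_def]

theorem countP_hist (u : ℕ → α) (p : α → Bool) (m : ℕ) :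
    ((hist u m).countP p : ℕ∞) = {t | t < m ∧ p (u t)}.encard := by
  induction m with
  | zero => simp [hist]
  | succ m ih =>
    rw [hist_succ, List.countP_append, Nat.cast_add, ih, List.countP_singleton]
    by_cases h : p (u m)
    · have : {t | t < m + 1 ∧ p (u t)} = insert m {t | t < m ∧ p (u t)} := by
        ext t; simp only [Set.mem_insert_iff, Set.mem_ofPred_eq]; grind
      rw [this, Set.encard_insert_of_notMem (by simp)]
      simp [h]
    · have : {t | t < m + 1 ∧ p (u t)} = {t | t < m ∧ p (u t)} := by
        ext t; simp only [Set.mem_ofPred_eq]; grind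
      rw [this]
      simp [h]

theorem count_hist (u : ℕ → α) (a : α) (m : ℕ) :
    ((hist u m).count a : ℕ∞) = {t | t < m ∧ u t = a}.encard := by
  simpa [List.count] using countP_hist u (· == a) m

theorem exists_count_hist_le {u v : ℕ → α}
    (hocc : ∀ a, {t | u t = a}.encard ≤ {t | v t = a}.encard) (m : ℕ) :
    ∃ M, ∀ a, (hist u m).count a ≤ (hist v M).count a := by
  have hletter : ∀ a, ∃ M, (hist u m).count a ≤ (hist v M).count a := by
    intro a
    have hle : ((hist u m).count a : ℕ∞) ≤ {t | v t = a}.encard := by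
      rw [count_hist]
      exact (Set.encard_mono fun _ ht => ht.2).trans (hocc a)
    obtain ⟨T, hTv, hT⟩ := Set.exists_subset_encard_eq hle
    obtain ⟨M, hM⟩ := (Set.finite_of_encard_eq_coe hT).bddAbove
    refine ⟨M + 1, ?_⟩
    have hTM : T.encard ≤ {t | t < M + 1 ∧ v t = a}.encard :=
      Set.encard_mono fun t ht => ⟨Nat.lt_succ_of_le (hM ht), hTv ht⟩
    rw [hT, ← count_hist] at hTM
    exact_mod_cast hTM
  choose M hM using hletter
  refine ⟨(hist u m).toFinset.sup M, fun a => ?_⟩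
  by_cases ha : a ∈ hist u m
  · exact (hM a).trans ((hist_prefix v (Finset.le_sup (List.mem_toFinset.2 ha))).count_le a)
  · simp [List.count_eq_zero.2 ha]

theorem prefix_of_prefix_of_count_le {l₁ l₂ l : List α} (h₁ : l₁ <+: l) (h₂ : l₂ <+: l)
    (hc : ∀ a, l₁.count a ≤ l₂.count a) : l₁ <+: l₂ := by
  obtain h | ⟨t, rfl⟩ := List.prefix_or_prefix_of_prefix h₁ h₂
  · exact h
  · suffices t = [] by simp [this]
    refine List.eq_nil_iff_forall_not_mem.2 fun a ha => ?_
    have := hc a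
    rw [List.count_append] at this
    have := List.count_pos_iff.2 ha
    omega

theorem getElem?_eq_some_of_prefix {β : Type} {l₁ l₂ : List β} {n : ℕ} {b : β}
    (h : l₁ <+: l₂) (hb : l₁[n]? = some b) : l₂[n]? = some b := by
  obtain ⟨t, rfl⟩ := h
  rw [List.getElem?_append_left (List.getElem?_eq_some_iff.1 hb).1, hb]

section Projection

variable {S : Set α} {u v : ℕ → α}

theorem inS_ofInf : InS S (ofInf u) = (u · ∈ S) := by
  funext j
  simp [InS, ofInf]

theorem countBelow_mem (j : ℕ) :
    countBelow (u · ∈ S) j = ((hist u j).filter (· ∈ S)).length := by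
  rw [countBelow, Set.ncard_def, ← List.countP_eq_length_filter,
    ← ENat.toNat_natCast (List.countP _ _), countP_hist]
  simp

theorem filter_hist_succ (j : ℕ) :
    (hist u (j + 1)).filter (· ∈ S) = (hist u j).filter (· ∈ S) ++ [u j].filter (· ∈ S) := by
  rw [hist_succ, List.filter_append]

theorem length_filter_hist_lt {i j : ℕ} (hi : u i ∈ S) (hij : i < j) :
    ((hist u i).filter (· ∈ S)).length < ((hist u j).filter (· ∈ S)).length := by
  have hle := ((hist_prefix u hij).filter (· ∈ S)).length_le
  rw [filter_hist_succ, List.length_append] at hle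
  simp [hi] at hle
  omega

theorem exists_of_getElem?_filter_hist {m n : ℕ} {a : α}
    (h : ((hist u m).filter (· ∈ S))[n]? = some a) :
    ∃ j, u j ∈ S ∧ ((hist u j).filter (· ∈ S)).length = n ∧ u j = a := by
  induction m with
  | zero => simp [hist] at h
  | succ m ih =>
    rw [filter_hist_succ, List.getElem?_append] at h
    split_ifs at h with hn
    · exact ih h
    by_cases hm : u m ∈ S
    · simp only [hm, decide_true, List.filter_cons_of_pos, List.filter_nil,
        List.getElem?_singleton, Option.ite_none_right_eq_some, Option.some.injEq] at h
      exact ⟨m, hm, by omega, h.2⟩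
    · simp [hm] at h

theorem proj_ofInf_eq_some_iff {n : ℕ} {a : α} :
    proj S (ofInf u) n = some a ↔ ∃ m, ((hist u m).filter (· ∈ S))[n]? = some a := by
  simp only [proj, inS_ofInf, countBelow_mem]
  constructor
  · intro h
    split_ifs at h with hex
    obtain ⟨hS, hcount⟩ := hex.choose_spec
    refine ⟨hex.choose + 1, ?_⟩
    rw [filter_hist_succ, List.getElem?_append_right hcount.le, hcount, Nat.sub_self, ← h]
    simp [hS, ofInf]
  · rintro ⟨m, hm⟩
    obtain ⟨j, hS, hcount, rfl⟩ := exists_of_getElem?_filter_hist hm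
    have hex : ∃ j, u j ∈ S ∧ ((hist u j).filter (· ∈ S)).length = n := ⟨j, hS, hcount⟩
    obtain ⟨hS', hcount'⟩ := hex.choose_spec
    have : hex.choose = j := by
      by_contra hne
      rcases Nat.lt_or_gt_of_ne hne with hlt | hlt
      · exact (length_filter_hist_lt hS' hlt).ne (hcount'.trans hcount.symm)
      · exact (length_filter_hist_lt hS hlt).ne (hcount.trans hcount'.symm)
    rw [dif_pos hex, this]
    rfl

theorem proj_ofInf_eq_of_cofinal
    (huv : ∀ m, ∃ m', (hist u m).filter (· ∈ S) <+: (hist v m').filter (· ∈ S))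
    (hvu : ∀ m, ∃ m', (hist v m).filter (· ∈ S) <+: (hist u m').filter (· ∈ S)) :
    proj S (ofInf u) = proj S (ofInf v) := by
  funext n
  refine Option.ext fun a => ?_
  simp only [proj_ofInf_eq_some_iff]
  constructor
  · rintro ⟨m, hm⟩
    exact (huv m).imp fun _ hp => getElem?_eq_some_of_prefix hp hm
  · rintro ⟨m, hm⟩
    exact (hvu m).imp fun _ hp => getElem?_eq_some_of_prefix hp hm

theorem proj_ofInf_eq_of_lag {g : ℕ → ℕ} (hg : Filter.Tendsto g Filter.atTop Filter.atTop)
    (hlag : ∀ n, (hist v (g n)).filter (· ∈ S) <+: (hist u n).filter (· ∈ S))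
    (hocc : ∀ a, {t | u t = a}.encard ≤ {t | v t = a}.encard) :
    proj S (ofInf u) = proj S (ofInf v) := by
  refine proj_ofInf_eq_of_cofinal (fun m => ?_) (fun m => ?_)
  · obtain ⟨M, hM⟩ := exists_count_hist_le hocc m
    obtain ⟨n, hmn, hMn⟩ := ((Filter.eventually_ge_atTop m).and (hg.eventually_ge_atTop M)).exists
    refine ⟨g n, prefix_of_prefix_of_count_le ((hist_prefix u hmn).filter _) (hlag n) fun a => ?_⟩
    by_cases ha : a ∈ S
    · have hpa : decide (a ∈ S) = true := by simpa using ha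
      rw [List.count_filter (p := (· ∈ S)) hpa, List.count_filter (p := (· ∈ S)) hpa]
      exact (hM a).trans ((hist_prefix v hMn).count_le a)
    · rw [List.count_eq_zero.2 (by simp [ha])]
      exact Nat.zero_le _
  · obtain ⟨n, hn⟩ := (hg.eventually_ge_atTop m).exists
    exact ⟨n, ((hist_prefix v hn).filter _).trans (hlag n)⟩

end Projection

section Flatten

variable {β : Type} (D : ℕ → List β)

def flattenUpTo (n : ℕ) : List β := ((List.range n).map D).flatten

theorem flattenUpTo_succ (n : ℕ) : flattenUpTo D (n + 1) = flattenUpTo D n ++ D n := by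
  simp [flattenUpTo, List.range_succ]

theorem flattenUpTo_prefix {m n : ℕ} (h : m ≤ n) : flattenUpTo D m <+: flattenUpTo D n := by
  induction n, h using Nat.le_induction with
  | base => exact List.prefix_rfl
  | succ n _ ih => exact ih.trans ⟨D n, (flattenUpTo_succ D n).symm⟩

theorem monotone_length_flattenUpTo : Monotone fun n => (flattenUpTo D n).length :=
  fun _ _ h => (flattenUpTo_prefix D h).length_le

theorem length_flattenUpTo_add_lt {r r' j : ℕ} (hj : j < (D r).length) (hr : r < r') :
    (flattenUpTo D r).length + j < (flattenUpTo D r').length := by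
  have := monotone_length_flattenUpTo D (Nat.succ_le_of_lt hr)
  simp only [flattenUpTo_succ, List.length_append] at this
  omega

theorem injOn_length_flattenUpTo_add :
    Set.InjOn (fun x : ℕ × ℕ => (flattenUpTo D x.1).length + x.2)
      {x | x.2 < (D x.1).length} := by
  rintro ⟨r, j⟩ hj ⟨r', j'⟩ hj' heq
  simp only [Set.mem_ofPred_eq] at hj hj' heq
  rcases lt_trichotomy r r' with hr | rfl | hr
  · have := length_flattenUpTo_add_lt D hj hr
    omega
  · simp_all
  · have := length_flattenUpTo_add_lt D hj' hr
    omega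

theorem exists_lt_length_flattenUpTo (h : {x : ℕ × ℕ | x.2 < (D x.1).length}.Infinite) (t : ℕ) :
    ∃ n, t < (flattenUpTo D n).length := by
  by_contra! hbdd
  refine h (Set.Finite.of_finite_image ?_ (injOn_length_flattenUpTo_add D))
  refine (Set.finite_Iio t).subset ?_
  rintro _ ⟨⟨r, j⟩, hj, rfl⟩
  exact (length_flattenUpTo_add_lt D hj (Nat.lt_succ_self r)).trans_le (hbdd (r + 1))

variable (hinf : ∀ t, ∃ n, t < (flattenUpTo D n).length)

def flattenInf (t : ℕ) : β := (flattenUpTo D (Nat.find (hinf t)))[t]'(Nat.find_spec (hinf t))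

theorem getElem_flattenUpTo {n t : ℕ} (h : t < (flattenUpTo D n).length) :
    (flattenUpTo D n)[t] = flattenInf D hinf t := by
  rcases le_total n (Nat.find (hinf t)) with hle | hle
  · exact (flattenUpTo_prefix D hle).getElem h
  · exact ((flattenUpTo_prefix D hle).getElem _).symm

theorem hist_flattenInf (n : ℕ) :
    hist (flattenInf D hinf) (flattenUpTo D n).length = flattenUpTo D n :=
  List.ext_getElem (by simp [hist]) fun t _ h => by simp [hist, getElem_flattenUpTo D hinf h]

theorem flattenInf_length_flattenUpTo_add {n j : ℕ} (hj : j < (D n).length) :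
    flattenInf D hinf ((flattenUpTo D n).length + j) = (D n)[j] := by
  rw [← getElem_flattenUpTo D hinf (length_flattenUpTo_add_lt D hj (Nat.lt_succ_self n))]
  simp [flattenUpTo_succ, List.getElem_append_right]

theorem encard_le_encard_flattenInf (p : β → Prop) :
    {x : ℕ × ℕ | ∃ b, (D x.1)[x.2]? = some b ∧ p b}.encard ≤
      {t | p (flattenInf D hinf t)}.encard := by
  have hsub : {x : ℕ × ℕ | ∃ b, (D x.1)[x.2]? = some b ∧ p b} ⊆ {x | x.2 < (D x.1).length} :=
    fun x ⟨_, hb, _⟩ => (List.getElem?_eq_some_iff.1 hb).1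
  rw [← ((injOn_length_flattenUpTo_add D).mono hsub).encard_image]
  refine Set.encard_mono ?_
  rintro _ ⟨⟨r, j⟩, ⟨b, hb, hpb⟩, rfl⟩
  obtain ⟨hj, rfl⟩ := List.getElem?_eq_some_iff.1 hb
  simpa [flattenInf_length_flattenUpTo_add D hinf hj] using hpb

theorem infinite_setOf_flattenInf {p : β → Prop} (h : {n | ∃ b ∈ D n, p b}.Infinite) :
    {t | p (flattenInf D hinf t)}.Infinite := by
  refine Set.infinite_of_forall_exists_gt fun T => ?_
  obtain ⟨n₀, hn₀⟩ := hinf T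
  obtain ⟨n, ⟨b, hb, hpb⟩, hn⟩ := h.exists_gt n₀
  obtain ⟨j, hj, rfl⟩ := List.getElem_of_mem hb
  refine ⟨(flattenUpTo D n).length + j, ?_, ?_⟩
  · simpa [flattenInf_length_flattenUpTo_add D hinf hj] using hpb
  · have := monotone_length_flattenUpTo D hn.le
    simp only at this
    omega

end Flatten

section Runs

variable (δ : Q → α → Set Q)

def IsRunList : Q → List (α × Q) → Prop
  | _, [] => True
  | q, m :: l => m.2 ∈ δ q m.1 ∧ IsRunList m.2 l

def lastState (q : Q) (l : List (α × Q)) : Q := l.foldl (fun _ m => m.2) q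

theorem lastState_append (q : Q) (l l' : List (α × Q)) :
    lastState q (l ++ l') = lastState (lastState q l) l' :=
  List.foldl_append

theorem isRunList_append {q : Q} {l l' : List (α × Q)} :
    IsRunList δ q (l ++ l') ↔ IsRunList δ q l ∧ IsRunList δ (lastState q l) l' := by
  induction l generalizing q with
  | nil => simp [IsRunList, lastState]
  | cons m l ih => simp [IsRunList, ih, lastState, and_assoc]

theorem IsRunList.of_prefix {q : Q} {l l' : List (α × Q)} (h : l <+: l')
    (hl' : IsRunList δ q l') : IsRunList δ q l := by
  obtain ⟨t, rfl⟩ := h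
  exact ((isRunList_append δ).1 hl').1

def stateSeq (q₀ : Q) (f : ℕ → α × Q) : ℕ → Q
  | 0 => q₀
  | t + 1 => (f t).2

theorem lastState_hist (q₀ : Q) (f : ℕ → α × Q) (t : ℕ) :
    lastState q₀ (hist f t) = stateSeq q₀ f t := by
  cases t with
  | zero => rfl
  | succ t => simp [lastState, hist_succ, stateSeq]

theorem stateSeq_succ_mem {q₀ : Q} {f : ℕ → α × Q} (hf : ∀ N, IsRunList δ q₀ (hist f N))
    (t : ℕ) : stateSeq q₀ f (t + 1) ∈ δ (stateSeq q₀ f t) (f t).1 := by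
  have := ((isRunList_append δ).1 (hist_succ f t ▸ hf (t + 1))).2
  rw [lastState_hist] at this
  exact this.1

end Runs

theorem infinite_setOf_stateSeq_mem {q₀ : Q} {f : ℕ → α × Q} {F : Set Q}
    (h : {t | (f t).2 ∈ F}.Infinite) : {t | stateSeq q₀ f t ∈ F}.Infinite :=
  (h.image (add_left_injective 1).injOn).mono (by rintro _ ⟨t, ht, rfl⟩; exact ht)

theorem infinite_setOf_succ {p : ℕ → Prop} (h : {n | p n}.Infinite) :
    {n | p (n + 1)}.Infinite := by
  refine Set.infinite_of_forall_exists_gt fun a => ?_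
  obtain ⟨b, hb, hab⟩ := h.exists_gt (a + 1)
  exact ⟨b - 1, by rwa [Set.mem_ofPred_eq, Nat.sub_add_cancel (by omega)], by omega⟩

section Buffers

variable {σ : Fin k → Set α} {δB : Q → α → Set Q}

theorem push_apply (bufs : Fin k → List α) (a : α) (i : Fin k) :
    push σ bufs a i = bufs i ++ [a].filter (· ∈ σ i) := by
  unfold push
  split_ifs with h <;> simp [h]

theorem eq_filter_append_pop {bufs : Fin k → List α} {b : α}
    (h : ∀ i, b ∈ σ i → (bufs i).head? = some b) (i : Fin k) :
    bufs i = [b].filter (· ∈ σ i) ++ pop σ bufs b i := by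
  unfold pop
  split_ifs with hb
  · obtain ⟨t, ht⟩ := List.head?_eq_some_iff.1 (h i hb)
    simp [ht, hb]
  · simp [hb]

theorem dupApply_q (c : Conf α P Q k) (d : List (α × Q)) :
    (dupApply σ c d).q = lastState c.q d := by
  induction d using List.reverseRecOn with
  | nil => rfl
  | append_singleton d m _ => simp [dupApply, lastState]

theorem DupLegal.isRunList {c : Conf α P Q k} {d : List (α × Q)} (h : DupLegal σ δB c d) :
    IsRunList δB c.q d := by
  induction d generalizing c with
  | nil => trivial
  | cons m d ih => exact ⟨h.1, ih h.2.2⟩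

theorem DupLegal.bufs_eq {c : Conf α P Q k} {d : List (α × Q)} (h : DupLegal σ δB c d)
    (i : Fin k) : c.bufs i = (d.map Prod.fst).filter (· ∈ σ i) ++ (dupApply σ c d).bufs i := by
  induction d generalizing c with
  | nil => rfl
  | cons m d ih =>
    have hd := ih h.2.2
    dsimp only at hd
    rw [eq_filter_append_pop h.2.1 i, hd, ← List.append_assoc, List.map_cons,
      ← List.filter_append]
    rfl

end Buffers

section Play

variable (σ : Fin k → Set α) (θ : List (α × P) → List (α × Q)) (c₀ : Conf α P Q k)
  (s : ℕ → α × P)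

theorem playConf_succ (n : ℕ) :
    playConf σ θ c₀ s (n + 1) =
      dupApply σ (spApply σ (playConf σ θ c₀ s n) (s n)) (resp θ s n) :=
  rfl

theorem playConf_q (n : ℕ) :
    (playConf σ θ c₀ s n).q = lastState c₀.q (flattenUpTo (resp θ s) n) := by
  induction n with
  | zero => rfl
  | succ n ih =>
    rw [playConf_succ, dupApply_q, flattenUpTo_succ, lastState_append, ← ih]
    rfl

def DupLegalAlways (δB : Q → α → Set Q) : Prop :=
  ∀ n, DupLegal σ δB (spApply σ (playConf σ θ c₀ s n) (s n)) (resp θ s n)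

variable {σ θ c₀ s} {δB : Q → α → Set Q}

theorem isRunList_flattenUpTo_resp (hleg : DupLegalAlways σ θ c₀ s δB) (n : ℕ) :
    IsRunList δB c₀.q (flattenUpTo (resp θ s) n) := by
  induction n with
  | zero => trivial
  | succ n ih =>
    rw [flattenUpTo_succ, isRunList_append, ← playConf_q]
    exact ⟨ih, (hleg n).isRunList⟩

theorem filter_flattenUpTo_resp_append_bufs (hleg : DupLegalAlways σ θ c₀ s δB) (i : Fin k)
    (n : ℕ) :
    ((flattenUpTo (resp θ s) n).map Prod.fst).filter (· ∈ σ i) ++ (playConf σ θ c₀ s n).bufs i =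
      c₀.bufs i ++ (hist (fun n => (s n).1) n).filter (· ∈ σ i) := by
  induction n with
  | zero => simp [playConf, hist, flattenUpTo]
  | succ n ih =>
    calc _ = ((flattenUpTo (resp θ s) n).map Prod.fst).filter (· ∈ σ i) ++
          (((resp θ s n).map Prod.fst).filter (· ∈ σ i) ++ (playConf σ θ c₀ s (n + 1)).bufs i) := by
          rw [flattenUpTo_succ, List.map_append, List.filter_append, List.append_assoc]
      _ = ((flattenUpTo (resp θ s) n).map Prod.fst).filter (· ∈ σ i) ++
          (playConf σ θ c₀ s n).bufs i ++ [(s n).1].filter (· ∈ σ i) := by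
          rw [playConf_succ, ← (hleg n).bufs_eq i, List.append_assoc]
          exact congrArg _ (push_apply _ _ i)
      _ = _ := by rw [ih, hist_succ, List.filter_append, List.append_assoc]

end Play

theorem exists_lt_length_flattenUpTo_resp [Finite α] {θ : List (α × P) → List (α × Q)}
    {s : ℕ → α × P} (hocc : ∀ a, spOcc s a = dupOcc θ s a) (t : ℕ) :
    ∃ n, t < (flattenUpTo (resp θ s) n).length := by
  refine exists_lt_length_flattenUpTo _ ?_ t
  obtain ⟨a, ha⟩ := Finite.exists_infinite_fiber fun n => (s n).1
  have : dupOcc θ s a = ⊤ := hocc a ▸ Set.encard_eq_top_iff.2 (Set.infinite_coe_iff.1 ha)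
  refine (Set.encard_eq_top_iff.1 this).mono ?_
  rintro x ⟨_, hb, _⟩
  exact (List.getElem?_eq_some_iff.1 hb).1

section DuplicatorWord

variable {σ : Fin k → Set α} {δB : Q → α → Set Q} {θ : List (α × P) → List (α × Q)}
  {c₀ : Conf α P Q k} {s : ℕ → α × P}
  (hinf : ∀ t, ∃ n, t < (flattenUpTo (resp θ s) n).length)

theorem isRunList_hist_flattenInf_resp (hleg : DupLegalAlways σ θ c₀ s δB) (N : ℕ) :
    IsRunList δB c₀.q (hist (flattenInf (resp θ s) hinf) N) := by
  obtain ⟨n, hn⟩ := hinf N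
  refine (isRunList_flattenUpTo_resp hleg n).of_prefix _ ?_
  rw [← hist_flattenInf _ hinf n]
  exact hist_prefix _ hn.le

theorem traceEquiv_flattenInf_resp (hleg : DupLegalAlways σ θ c₀ s δB) (h₀ : ∀ i, c₀.bufs i = [])
    (hocc : ∀ a, spOcc s a = dupOcc θ s a) :
    TraceEquiv σ (ofInf fun t => (flattenInf (resp θ s) hinf t).1) (ofInf fun n => (s n).1) := by
  intro i
  refine Eq.symm <| proj_ofInf_eq_of_lag (g := fun n => (flattenUpTo (resp θ s) n).length)
    (Filter.tendsto_atTop_atTop_of_monotone (monotone_length_flattenUpTo _)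
      fun t => (hinf t).imp fun _ => le_of_lt) (fun n => ?_)
    fun a => (hocc a).trans_le (encard_le_encard_flattenInf _ hinf (·.1 = a))
  rw [show (fun t => (flattenInf (resp θ s) hinf t).1) = Prod.fst ∘ flattenInf (resp θ s) hinf
    from rfl, hist_comp, hist_flattenInf]
  exact ⟨(playConf σ θ c₀ s n).bufs i, by
    rw [filter_flattenUpTo_resp_append_bufs hleg, h₀, List.nil_append]⟩

end DuplicatorWord

theorem lang_subset_closure_of_simu_general {α : Type} [Fintype α] {k : ℕ}
    (σ : Fin k → Set α) (κ : Fin k → ℕ∞)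
    (A B : NBA α) (h : Simu σ κ A B) :
    Lang A ⊆ closure σ (Lang B) := by
  obtain ⟨θ, hθ⟩ := h
  rintro w ⟨r, ⟨hr₀, hr⟩, hacc⟩
  set s : ℕ → α × A.Q := fun n => (w n, r (n + 1))
  have hsp : ∀ n, SpLegalAt σ A.δ θ ⟨A.init, fun _ => [], B.init⟩ s n := by
    rintro (_ | n)
    · exact hr₀ ▸ hr 0
    · exact hr (n + 1)
  have hleg : DupLegalAlways σ θ _ s B.δ := fun n => ((hθ s).1 n fun m _ => hsp m).1
  obtain ⟨hdacc, hocc⟩ := (hθ s).2 hsp (infinite_setOf_succ hacc)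
  have hinf := exists_lt_length_flattenUpTo_resp hocc
  set f := flattenInf (resp θ s) hinf
  refine ⟨fun t => (f t).1, ⟨stateSeq B.init f, ⟨rfl, ?_⟩, ?_⟩, ?_⟩
  · exact stateSeq_succ_mem B.δ (isRunList_hist_flattenInf_resp hinf hleg)
  · exact infinite_setOf_stateSeq_mem (infinite_setOf_flattenInf _ hinf hdacc)
  · exact traceEquiv_flattenInf_resp hinf hleg (fun _ => rfl) hocc

/-- **Theorem (soundness of multi-buffer simulation).**
Let `σ = (Σ_i)_{i∈[k]}` be a trace alphabet (the finite alphabet `α` is covered by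
the `σ i`), `κ : [k] → ℕ ∪ {ω}` a capacity function, and `A`, `B` two NBA over `α`.
If Duplicator has a winning strategy in the multi-buffer game `G^κ_σ(A,B)`
(i.e. `A ⊑^κ_σ B`), then `L(A) ⊆ [L(B)]_σ`. -/
theorem lang_subset_closure_of_simu {α : Type} [Fintype α] {k : ℕ}
    (σ : Fin k → Set α) (hcov : ∀ a : α, ∃ i, a ∈ σ i) (κ : Fin k → ℕ∞)
    (A B : NBA α) (h : Simu σ κ A B) :
    Lang A ⊆ closure σ (Lang B) :=
  lang_subset_closure_of_simu_general σ κ A B h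

end MultiBuffer
end
end

section
/- Let σ=(Σ_i)_{i∈[k]} be a trace alphabet, u ∈ Σ^ω an infinite word and v ∈ Σ^∞ a finite or infinite word. Suppose (1) for every i ∈ [k], the projection π_i(v) is a prefix of π_i(u), and (2) for every letter a ∈ Σ, the number of occurrences of a in v equals the number of occurrences of a in u (as elements of ℕ∪{∞}). Then u ∼_σ v, i.e. π_i(u) = π_i(v) for all i ∈ [k]. -/
/-! Position `n` of `π_S(w)` is defined iff `w` has more than `n` letters from `S`, and that
number is the sum over `a ∈ S` of the occurrence counts of `a`, which agree for `u` and `v`.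
Hence `π_i(v)` and `π_i(u)` have the same length, and a prefix of full length is the whole word.
-/

open Classical

noncomputable section

namespace MultiBuffer

variable {α P Q : Type} {k : ℕ}

/-- A word `x ∈ Σ^∞` is a prefix of a word `y ∈ Σ^∞` (in the representation of
finite or infinite words as stable functions `ℕ → Option α`). -/
def IsPrefixW {α : Type} (x y : ℕ → Option α) : Prop :=
  ∀ n a, x n = some a → y n = some a

/-- The number of occurrences of the letter `a` in the word `w` (an element of `ℕ∪{∞}`). -/
def occCount {α : Type} (w : ℕ → Option α) (a : α) : ℕ∞ := {n | w n = some a}.encard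

theorem countBelow_eq_count (p : ℕ → Prop) [DecidablePred p] (j : ℕ) :
    countBelow p j = Nat.count p j := by
  rw [Nat.count_eq_card_filter_range, countBelow, ← Set.ncard_coe_finset]
  congr 1
  ext i
  simp

theorem coe_lt_encard_setOf_iff (p : ℕ → Prop) (n : ℕ) :
    (n : ℕ∞) < {j | p j}.encard ↔ ∀ hf : {j | p j}.Finite, n < hf.toFinset.card := by
  rcases {j | p j}.finite_or_infinite with hf | hf
  · simp [hf.encard_eq_coe_toFinset_card, hf]
  · simp [hf]

/-- Enumerating `{j | p j}` increasingly, `countBelow p` inverts `Nat.nth p`. -/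
theorem exists_countBelow_eq_iff (p : ℕ → Prop) (n : ℕ) :
    (∃ j, p j ∧ countBelow p j = n) ↔ (n : ℕ∞) < {j | p j}.encard := by
  simp only [countBelow_eq_count, coe_lt_encard_setOf_iff]
  constructor
  · rintro ⟨j, hj, rfl⟩
    obtain ⟨m, hm, rfl⟩ := Nat.exists_lt_card_nth_eq hj
    rwa [Nat.count_nth hm]
  · intro hn
    exact ⟨Nat.nth p n, Nat.nth_mem n hn, Nat.count_nth hn⟩

theorem proj_eq_none_iff (S : Set α) (w : ℕ → Option α) (n : ℕ) :
    proj S w n = none ↔ {j | InS S w j}.encard ≤ n := by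
  rw [← not_lt, ← exists_countBelow_eq_iff, proj]
  split_ifs with h
  · obtain ⟨a, -, ha⟩ := h.choose_spec.1
    simp [ha, h]
  · simp [h]

theorem setOf_inS_eq_iUnion (S : Set α) (w : ℕ → Option α) :
    {j | InS S w j} = ⋃ a : S, {j | w j = some a} := by
  ext j
  simp [InS]

theorem encard_setOf_inS_congr {S : Set α} {v w : ℕ → Option α}
    (h : ∀ a ∈ S, occCount v a = occCount w a) :
    {j | InS S v j}.encard = {j | InS S w j}.encard := by
  have hdisj (x : ℕ → Option α) :
      Pairwise (Function.onFun Disjoint fun a : S => {j | x j = some a}) :=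
    fun a b hab => Set.disjoint_left.2 fun j ha hb =>
      hab (Subtype.ext (Option.some_injective _ (ha.symm.trans hb)))
  -- subsets of `ℕ` are countable, so their cardinal is determined by `encard`
  have hmk (a : S) : Cardinal.mk {j | v j = some a} = Cardinal.mk {j | w j = some a} :=
    Cardinal.toENat_injOn Cardinal.mk_le_aleph0 Cardinal.mk_le_aleph0 (h a a.2)
  simp only [Set.encard, ENat.card, setOf_inS_eq_iUnion, Cardinal.mk_iUnion_eq_sum_mk (hdisj _),
    hmk]

theorem traceEquiv_of_prefix_of_occ_general {α : Type} {k : ℕ}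
    (σ : Fin k → Set α)
    (u : ℕ → α) (v : ℕ → Option α)
    (hpre : ∀ i, IsPrefixW (proj (σ i) v) (proj (σ i) (ofInf u)))
    (hocc : ∀ a : α, occCount v a = occCount (ofInf u) a) :
    ∀ i, proj (σ i) (ofInf u) = proj (σ i) v := by
  intro i
  funext n
  cases hvn : proj (σ i) v n with
  | some b => exact hpre i n b hvn
  | none =>
    rw [proj_eq_none_iff] at hvn ⊢
    rwa [← encard_setOf_inS_congr fun a _ => hocc a]

/-- **Lemma.** Let `σ = (Σ_i)_{i∈[k]}` be a trace alphabet, `u ∈ Σ^ω` an infinite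
word and `v ∈ Σ^∞` a finite or infinite word. If (1) for every `i`, `π_i(v)` is a
prefix of `π_i(u)` and (2) every letter occurs equally often in `u` and in `v`
(as elements of `ℕ ∪ {∞}`), then `u ∼_σ v`, i.e. `π_i(u) = π_i(v)` for all `i`. -/
theorem traceEquiv_of_prefix_of_occ {α : Type} [Fintype α] {k : ℕ}
    (σ : Fin k → Set α) (hcov : ∀ a : α, ∃ i, a ∈ σ i)
    (u : ℕ → α) (v : ℕ → Option α) (hv : Stable v)
    (hpre : ∀ i, IsPrefixW (proj (σ i) v) (proj (σ i) (ofInf u)))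
    (hocc : ∀ a : α, occCount v a = occCount (ofInf u) a) :
    ∀ i, proj (σ i) (ofInf u) = proj (σ i) v :=
  traceEquiv_of_prefix_of_occ_general σ u v hpre hocc

end MultiBuffer
end
end

section
/- Let T be a tree (a nonempty prefix-closed set of finite sequences of natural numbers, with root ε). Define the Büchi game G(T) as follows: take the graph with node set T ∪ {g} (g a fresh node) and base edges all parent–child pairs (t, t') of T together with an edge (t, g) for every t ∈ T ∪ {g}; replace every base edge (u,v) by a path u → m_{(u,v)} → v through a fresh intermediate node m_{(u,v)}orthogonal to all others; let Own = T ∪ {g} (all intermediate nodes belong to player 1), Fin = T, and initial node ε. Then player 0 has a winning strategy in G(T) if and only if T contains an infinite branch (an infinite sequence all of whose finite prefixes lie in T). -/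
open Classical

noncomputable section

namespace MultiBuffer

variable {α P Q : Type} {k : ℕ}

/-! ### Büchi games -/

/-- A Büchi game `G = (V, E, Own, Fin, v_I)`: the nodes in `Own` belong to player 0,
the others to player 1; player 0 wins an infinite play iff it visits `FinSet`
infinitely often; a player who cannot choose a successor loses. -/
structure BGame (V : Type) where
  E : V → V → Prop
  Own : Set V
  FinSet : Set V
  init : V

namespace BGame

variable {V : Type}

/-- The history of the play `ρ` after `n` steps (current node first). -/
def bhist (ρ : ℕ → V) (n : ℕ) : List V := (List.ofFn (fun i : Fin (n + 1) => ρ i)).reverse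

/-- The finite play histories (current node first) that can arise when player 0
follows the strategy `str` (player 1 moves along arbitrary edges). -/
inductive ReachH (G : BGame V) (str : List V → V) : List V → Prop
  | base : ReachH G str [G.init]
  | step0 {v : V} {h : List V} : ReachH G str (v :: h) → v ∈ G.Own →
      ReachH G str (str (v :: h) :: v :: h)
  | step1 {v w : V} {h : List V} : ReachH G str (v :: h) → v ∉ G.Own → G.E v w →
      ReachH G str (w :: v :: h)

/-- The infinite play `ρ` is consistent with player 0's strategy `str`. -/
def Consistent (G : BGame V) (str : List V → V) (ρ : ℕ → V) : Prop :=
  ρ 0 = G.init ∧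
  ∀ n, (ρ n ∈ G.Own ∧ ρ (n + 1) = str (bhist ρ n)) ∨ (ρ n ∉ G.Own ∧ G.E (ρ n) (ρ (n + 1)))

/-- Player 0 has a winning strategy in the Büchi game `G`: a strategy that always
proposes legal moves at reachable histories ending in a node of player 0 (so player 0
is never stuck, while player 1 getting stuck makes player 0 win the finite play), and
such that every consistent infinite play visits `FinSet` infinitely often. -/
def Wins0 (G : BGame V) : Prop :=
  ∃ str : List V → V,
    (∀ (h : List V) (v : V), ReachH G str (v :: h) → v ∈ G.Own → G.E v (str (v :: h))) ∧
    (∀ ρ : ℕ → V, Consistent G str ρ → {n | ρ n ∈ G.FinSet}.Infinite)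

end BGame

/-! ### Trees and the games `G(T)`, `H(T)` -/

/-- A tree: a nonempty prefix-closed set of finite sequences of natural numbers. -/
def IsTree (T : Set (List ℕ)) : Prop :=
  T.Nonempty ∧ ∀ l ∈ T, ∀ l', l' <+: l → l' ∈ T

/-- `T` contains an infinite branch: an infinite sequence all of whose finite
prefixes lie in `T`. -/
def InfBranch (T : Set (List ℕ)) : Prop :=
  ∃ β : ℕ → ℕ, ∀ n, (List.ofFn fun i : Fin n => β i) ∈ T

/-- The base nodes of the games built from a tree: the tree nodes (`some t`) plus
one fresh node `none` (called `g` resp. `h`). -/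
abbrev BaseNode := Option (List ℕ)

/-- The base edges: parent–child pairs of `T`, an edge from every node of `T` to the
fresh node, and the self-loop on the fresh node. -/
def baseEdge (T : Set (List ℕ)) : BaseNode → BaseNode → Prop
  | some t, some t' => t ∈ T ∧ t' ∈ T ∧ ∃ m, t' = t ++ [m]
  | some t, none => t ∈ T
  | none, none => True
  | none, some _ => False

/-- The node type after replacing every base edge `(u,v)` by a path of length 2
through a fresh intermediate node `m_(u,v)` (represented by `Sum.inr (u,v)`). -/
abbrev SubdivNode := BaseNode ⊕ BaseNode × BaseNode

/-- The subdivided edge relation: `u → m_(u,v) → v` for every base edge `(u,v)`. -/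
def subdivE (T : Set (List ℕ)) : SubdivNode → SubdivNode → Prop := fun x y =>
  (∃ u v, x = Sum.inl u ∧ y = Sum.inr (u, v) ∧ baseEdge T u v) ∨
  (∃ u v, x = Sum.inr (u, v) ∧ y = Sum.inl v ∧ baseEdge T u v)

/-- The Büchi game `G(T)`: the subdivision of the tree `T` with the extra node `g`,
where all base nodes belong to player 0 (the intermediate nodes to player 1), the
winning nodes are the tree nodes, and the play starts at the root `ε`. -/
def gameG (T : Set (List ℕ)) : BGame SubdivNode where
  E := subdivE T
  Own := {x | ∃ b, x = Sum.inl b}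
  FinSet := {x | ∃ t ∈ T, x = Sum.inl (some t)}
  init := Sum.inl (some [])

/-! Every intermediate node `m_(u,v)` has the single successor `v`, so player 1 never has a
real choice and a legal strategy of player 0 determines one path through the base graph,
starting at the root. The fresh node `g` is a sink, so this path visits tree nodes
infinitely often only if it never leaves `T`; it then walks from parent to child forever,
i.e. along an infinite branch. Conversely, following a branch visits a tree node at every
second step. -/

lemma infinite_of_forall_or_succ {s : Set ℕ} (h : ∀ n, n ∈ s ∨ n + 1 ∈ s) :
    s.Infinite := by
  refine Set.infinite_of_not_bddAbove fun ⟨N, hN⟩ => ?_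
  rcases h (N + 1) with hs | hs <;> have := hN hs <;> omega

namespace BGame

variable {V : Type} {G : BGame V} {str : List V → V} {ρ : ℕ → V}

lemma bhist_eq_cons (ρ : ℕ → V) (n : ℕ) :
    bhist ρ n = ρ n :: (List.ofFn fun i : Fin n => ρ i).reverse := by
  rw [bhist, List.ofFn_succ_last, List.reverse_append]
  rfl

lemma bhist_succ (ρ : ℕ → V) (n : ℕ) : bhist ρ (n + 1) = ρ (n + 1) :: bhist ρ n :=
  bhist_eq_cons ρ (n + 1)

def IsLegal (G : BGame V) (str : List V → V) : Prop :=
  ∀ (h : List V) (v : V), ReachH G str (v :: h) → v ∈ G.Own → G.E v (str (v :: h))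

lemma ReachH.eq_init_or_edge (hstr : IsLegal G str) {w : V} {h : List V}
    (hr : ReachH G str (w :: h)) :
    (h = [] ∧ w = G.init) ∨ ∃ v h', h = v :: h' ∧ G.E v w := by
  cases hr with
  | base => exact .inl ⟨rfl, rfl⟩
  | step0 hr hv => exact .inr ⟨_, _, rfl, hstr _ _ hr hv⟩
  | step1 _ _ hE => exact .inr ⟨_, _, rfl, hE⟩

lemma ReachH.head_mem {S : Set V} (hinit : G.init ∈ S)
    (hstr : ∀ v h, v ∈ S → v ∈ G.Own → str (v :: h) ∈ S)
    (hopp : ∀ v w, v ∈ S → v ∉ G.Own → G.E v w → w ∈ S) {l : List V}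
    (hr : ReachH G str l) : ∀ v ∈ l.head?, v ∈ S := by
  induction hr with
  | base => simpa using hinit
  | step0 _ hv ih => simpa using hstr _ _ (ih _ rfl) hv
  | step1 _ hv hE ih => simpa using hopp _ _ (ih _ rfl) hv hE

lemma Consistent.reachH_bhist (hρ : Consistent G str ρ) : ∀ n, ReachH G str (bhist ρ n)
  | 0 => by rw [bhist_eq_cons, hρ.1]; exact .base
  | n + 1 => by
    have ih := hρ.reachH_bhist n
    rw [bhist_eq_cons] at ih
    rw [bhist_succ, bhist_eq_cons]
    rcases hρ.2 n with ⟨hown, hnext⟩ | ⟨hown, hE⟩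
    · rw [hnext, bhist_eq_cons]; exact .step0 ih hown
    · exact .step1 ih hown hE

lemma Consistent.isPath (hρ : Consistent G str ρ) (hstr : IsLegal G str) (n : ℕ) :
    G.E (ρ n) (ρ (n + 1)) := by
  rcases hρ.2 n with ⟨hown, hnext⟩ | ⟨_, hE⟩
  · have hr := hρ.reachH_bhist n
    rw [bhist_eq_cons] at hr
    rw [hnext, bhist_eq_cons]
    exact hstr _ _ hr hown
  · exact hE

/-- The history, current node first, of the play in which player 0 follows `str` and
player 1 answers `opp`; it is never empty, so `headD` never falls back to its default. -/
def outcomeHist (G : BGame V) (str : List V → V) (opp : V → V) : ℕ → List V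
  | 0 => [G.init]
  | n + 1 =>
    let h := outcomeHist G str opp n
    (if h.headD G.init ∈ G.Own then str h else opp (h.headD G.init)) :: h

def outcome (G : BGame V) (str : List V → V) (opp : V → V) (n : ℕ) : V :=
  (outcomeHist G str opp n).headD G.init

lemma bhist_outcome (opp : V → V) (n : ℕ) :
    bhist (outcome G str opp) n = outcomeHist G str opp n := by
  induction n with
  | zero => rfl
  | succ n ih => rw [bhist_succ, ih]; rfl

lemma outcome_succ (opp : V → V) (n : ℕ) :
    outcome G str opp (n + 1) = if outcome G str opp n ∈ G.Own
      then str (bhist (outcome G str opp) n) else opp (outcome G str opp n) := by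
  rw [bhist_outcome]; rfl

lemma consistent_outcome {opp : V → V}
    (hopp : ∀ v h, ReachH G str (v :: h) → v ∉ G.Own → G.E v (opp v)) :
    Consistent G str (outcome G str opp) := by
  have hreach : ∀ n, ReachH G str (bhist (outcome G str opp) n) := by
    intro n
    induction n with
    | zero => exact .base
    | succ n ih =>
      rw [bhist_eq_cons] at ih
      rw [bhist_succ, outcome_succ, bhist_eq_cons]
      split_ifs with hown
      · exact .step0 ih hown
      · exact .step1 ih hown (hopp _ _ ih hown)
  refine ⟨rfl, fun n => ?_⟩
  rw [outcome_succ]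
  by_cases hown : outcome G str opp n ∈ G.Own
  · exact .inl ⟨hown, if_pos hown⟩
  · have hr := hreach n
    rw [bhist_eq_cons] at hr
    exact .inr ⟨hown, by rw [if_neg hown]; exact hopp _ _ hr hown⟩

end BGame

open BGame

section GameG

variable {T : Set (List ℕ)}

lemma subdivE_inl_iff {u : BaseNode} {y : SubdivNode} :
    subdivE T (.inl u) y ↔ ∃ v, y = .inr (u, v) ∧ baseEdge T u v := by
  simp [subdivE]

lemma subdivE_inr_iff {u v : BaseNode} {y : SubdivNode} :
    subdivE T (.inr (u, v)) y ↔ y = .inl v ∧ baseEdge T u v := by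
  simp [subdivE]

lemma baseEdge_of_subdivE_inr {x : SubdivNode} {u v : BaseNode}
    (h : subdivE T x (.inr (u, v))) : baseEdge T u v := by
  rcases h with ⟨a, b, -, hy, hab⟩ | ⟨a, b, -, hy, -⟩
  · cases hy
    exact hab
  · cases hy

lemma eq_none_of_baseEdge_none {v : BaseNode} (h : baseEdge T none v) : v = none := by
  cases v <;> simp_all [baseEdge]

lemma inl_mem_own_gameG (b : BaseNode) : (.inl b : SubdivNode) ∈ (gameG T).Own := ⟨b, rfl⟩

lemma inr_not_mem_own_gameG (p : BaseNode × BaseNode) :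
    (.inr p : SubdivNode) ∉ (gameG T).Own := by
  rintro ⟨b, hb⟩
  cases hb

lemma subdivE_two_steps {u : BaseNode} {y z : SubdivNode} (h₁ : subdivE T (.inl u) y)
    (h₂ : subdivE T y z) : ∃ v, y = .inr (u, v) ∧ z = .inl v ∧ baseEdge T u v := by
  obtain ⟨v, rfl, huv⟩ := subdivE_inl_iff.1 h₁
  exact ⟨v, rfl, (subdivE_inr_iff.1 h₂).1, huv⟩

def branchPrefix (β : ℕ → ℕ) (n : ℕ) : List ℕ := List.ofFn fun i : Fin n => β i

lemma branchPrefix_succ (β : ℕ → ℕ) (n : ℕ) :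
    branchPrefix β (n + 1) = branchPrefix β n ++ [β n] := by
  rw [branchPrefix, List.ofFn_succ_last]
  rfl

section Forward

variable {ρ : ℕ → SubdivNode}

lemma exists_base_of_isPath {u₀ : BaseNode} (h0 : ρ 0 = .inl u₀)
    (hρ : ∀ n, subdivE T (ρ n) (ρ (n + 1))) :
    ∃ b : ℕ → BaseNode, b 0 = u₀ ∧ ∀ n, ρ (2 * n) = .inl (b n) ∧
      ρ (2 * n + 1) = .inr (b n, b (n + 1)) ∧ baseEdge T (b n) (b (n + 1)) := by
  have hstep : ∀ n u, ρ (2 * n) = .inl u →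
      ∃ v, ρ (2 * n + 1) = .inr (u, v) ∧ ρ (2 * (n + 1)) = .inl v ∧ baseEdge T u v :=
    fun n u hu => subdivE_two_steps (hu ▸ hρ (2 * n)) (hρ (2 * n + 1))
  have heven : ∀ n, ∃ u, ρ (2 * n) = .inl u := by
    intro n
    induction n with
    | zero => exact ⟨u₀, h0⟩
    | succ n ih =>
      obtain ⟨u, hu⟩ := ih
      obtain ⟨v, -, hv, -⟩ := hstep n u hu
      exact ⟨v, hv⟩
  choose b hb using heven
  refine ⟨b, Sum.inl.inj ((hb 0).symm.trans h0), fun n => ?_⟩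
  obtain ⟨v, hodd, hv, huv⟩ := hstep n (b n) (hb n)
  obtain rfl : v = b (n + 1) := Sum.inl.inj (hv.symm.trans (hb (n + 1)))
  exact ⟨hb n, hodd, huv⟩

lemma infBranch_of_chain {t : ℕ → List ℕ} (h0 : t 0 = []) (hT : ∀ n, t n ∈ T)
    (hstep : ∀ n, ∃ m, t (n + 1) = t n ++ [m]) : InfBranch T := by
  choose β hβ using hstep
  refine ⟨β, fun n => show branchPrefix β n ∈ T from ?_⟩
  suffices t n = branchPrefix β n from this ▸ hT n
  induction n with
  | zero => exact h0
  | succ n ih => rw [hβ, ih, branchPrefix_succ]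

lemma infBranch_of_isPath (h0 : ρ 0 = (gameG T).init) (hρ : ∀ n, subdivE T (ρ n) (ρ (n + 1)))
    (hfin : {n | ρ n ∈ (gameG T).FinSet}.Infinite) : InfBranch T := by
  obtain ⟨b, hb0, hb⟩ := exists_base_of_isPath h0 hρ
  have hsink : ∀ n, b n = none → ∀ m ≥ n, b m = none := by
    intro n hn m hm
    induction m, hm using Nat.le_induction with
    | base => exact hn
    | succ m _ ih => exact eq_none_of_baseEdge_none (ih ▸ (hb m).2.2)
  have hvisits : {n | ρ n ∈ (gameG T).FinSet} ⊆ (2 * ·) '' {k | b k ≠ none} := by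
    rintro m ⟨t, -, hm⟩
    obtain ⟨k, rfl | rfl⟩ := Nat.even_or_odd' m
    · refine ⟨k, fun hk => ?_, rfl⟩
      rw [(hb k).1, hk] at hm
      cases hm
    · rw [(hb k).2.1] at hm
      cases hm
  have hsome : ∀ n, b n ≠ none := by
    intro n hn
    refine (hfin.mono hvisits).of_image _ ((Set.finite_Iio n).subset fun k hk => ?_)
    by_contra hkn
    exact hk (hsink n hn k (not_lt.1 hkn))
  choose t ht using fun n => Option.ne_none_iff_exists'.1 (hsome n)
  have hedge : ∀ n, baseEdge T (some (t n)) (some (t (n + 1))) := fun n =>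
    ht n ▸ ht (n + 1) ▸ (hb n).2.2
  exact infBranch_of_chain (Option.some.inj ((ht 0).symm.trans hb0))
    (fun n => (hedge n).1) (fun n => (hedge n).2.2)

end Forward

/-- Player 1's only move at `m_(u,v)`; the value at base nodes is never used. -/
def forcedReply : SubdivNode → SubdivNode
  | .inl u => .inl u
  | .inr (_, v) => .inl v

lemma forcedReply_legal {str : List SubdivNode → SubdivNode} (hstr : IsLegal (gameG T) str)
    (v : SubdivNode) (h : List SubdivNode) (hr : ReachH (gameG T) str (v :: h))
    (hv : v ∉ (gameG T).Own) : (gameG T).E v (forcedReply v) := by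
  rcases v with u | ⟨u, w⟩
  · exact absurd (inl_mem_own_gameG _) hv
  rcases hr.eq_init_or_edge hstr with ⟨-, hinit⟩ | ⟨x, -, -, hx⟩
  · cases hinit
  · exact subdivE_inr_iff.2 ⟨rfl, baseEdge_of_subdivE_inr hx⟩

theorem infBranch_of_wins0 (h : (gameG T).Wins0) : InfBranch T := by
  obtain ⟨str, hstr, hwin⟩ := h
  have hρ := consistent_outcome (forcedReply_legal hstr)
  exact infBranch_of_isPath hρ.1 (hρ.isPath hstr) (hwin _ hρ)

section Backward

variable {β : ℕ → ℕ}

def branchStrategy (β : ℕ → ℕ) : List SubdivNode → SubdivNode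
  | .inl (some t) :: _ => .inr (some t, some (t ++ [β t.length]))
  | _ => .inl none

lemma branchStrategy_prefix (n : ℕ) (h : List SubdivNode) :
    branchStrategy β (.inl (some (branchPrefix β n)) :: h) =
      .inr (some (branchPrefix β n), some (branchPrefix β (n + 1))) := by
  simp only [branchStrategy, branchPrefix_succ]
  rw [branchPrefix, List.length_ofFn]

def branchNodes (β : ℕ → ℕ) : Set SubdivNode :=
  Set.range (fun n => .inl (some (branchPrefix β n))) ∪
    Set.range (fun n => .inr (some (branchPrefix β n), some (branchPrefix β (n + 1))))

lemma mem_branchNodes_of_reachH {v : SubdivNode} {h : List SubdivNode}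
    (hr : ReachH (gameG T) (branchStrategy β) (v :: h)) : v ∈ branchNodes β := by
  refine hr.head_mem (.inl ⟨0, rfl⟩) ?_ ?_ v rfl
  · rintro _ h (⟨n, rfl⟩ | ⟨n, rfl⟩) hown
    · rw [branchStrategy_prefix]; exact .inr ⟨n, rfl⟩
    · exact absurd hown (inr_not_mem_own_gameG _)
  · rintro _ w (⟨n, rfl⟩ | ⟨n, rfl⟩) hown hE
    · exact absurd (inl_mem_own_gameG _) hown
    · exact .inl ⟨n + 1, ((subdivE_inr_iff.1 hE).1).symm⟩

lemma isLegal_branchStrategy (hβ : ∀ n, branchPrefix β n ∈ T) :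
    IsLegal (gameG T) (branchStrategy β) := by
  intro h v hr hown
  obtain ⟨n, rfl⟩ | ⟨n, rfl⟩ := mem_branchNodes_of_reachH hr
  · rw [branchStrategy_prefix]
    exact subdivE_inl_iff.2 ⟨_, rfl, hβ n, hβ (n + 1), β n, branchPrefix_succ β n⟩
  · exact absurd hown (inr_not_mem_own_gameG _)

theorem wins0_of_infBranch (hβ : ∀ n, branchPrefix β n ∈ T) : (gameG T).Wins0 := by
  refine ⟨branchStrategy β, isLegal_branchStrategy hβ, fun ρ hρ => ?_⟩
  refine infinite_of_forall_or_succ fun n => ?_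
  have hr := hρ.reachH_bhist n
  rw [bhist_eq_cons] at hr
  obtain ⟨k, hk⟩ | ⟨k, hk⟩ := mem_branchNodes_of_reachH hr
  · exact .inl ⟨_, hβ k, hk.symm⟩
  · have hE := hρ.isPath (isLegal_branchStrategy hβ) n
    rw [← hk] at hE
    exact .inr ⟨_, hβ (k + 1), (subdivE_inr_iff.1 hE).1⟩

end Backward

end GameG

theorem wins0_gameG_iff_infBranch_general (T : Set (List ℕ)) :
    BGame.Wins0 (gameG T) ↔ InfBranch T :=
  ⟨infBranch_of_wins0, fun ⟨_, hβ⟩ => wins0_of_infBranch hβ⟩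

/-- **Lemma.** Player 0 has a winning strategy in the Büchi game `G(T)` iff the
tree `T` contains an infinite branch. -/
theorem wins0_gameG_iff_infBranch (T : Set (List ℕ)) (hT : IsTree T) :
    BGame.Wins0 (gameG T) ↔ InfBranch T :=
  wins0_gameG_iff_infBranch_general T

end MultiBuffer
end
end

section
/- Let T be a tree (a nonempty prefix-closed set of finite sequences of natural numbers, with root ε). Define the Büchi game H(T) as follows: take the graph with node set T ∪ {h} (h a fresh node) and base edges all parent–child pairs (t, t') of T together with an edge (t, h) for every t ∈ T ∪ {h}; replace every base edge (u,v) by a path u → m_{(u,v)} → v through a fresh intermediate node m_{(u,v)}; let Own consist exactly of the intermediate nodes (the nodes of T and the node h belong to player 1), Fin = {h, h'} where h' = m_{(h,h)}, and initial node ε. Then player 0 has a winning strategy in H(T) if and only if T contains no infinite branch. -/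
open Classical

noncomputable section

namespace MultiBuffer

variable {α P Q : Type} {k : ℕ}

/-- The Büchi game `H(T)`: the subdivision of the tree `T` with the extra node `h`,
where exactly the intermediate nodes belong to player 0 (the nodes of `T` and the
node `h` belong to player 1), the winning nodes are `h` and `h' = m_(h,h)`, and the
play starts at the root `ε`. -/
def gameH (T : Set (List ℕ)) : BGame SubdivNode where
  E := subdivE T
  Own := {x | ∃ u v, x = Sum.inr (u, v)}
  FinSet := {Sum.inl none, Sum.inr (none, none)}
  init := Sum.inl (some [])

/-! ### Auxiliary material for the proof -/

private def Lb (β : ℕ → ℕ) (n : ℕ) : List ℕ := List.ofFn (fun i : Fin n => β i)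

private lemma Lb_succ (β : ℕ → ℕ) (n : ℕ) : Lb β (n+1) = Lb β n ++ [β n] := by
  rw [Lb, List.ofFn_succ']
  simp [Lb]

private lemma bhist_zero' {V : Type} (ρ : ℕ → V) : BGame.bhist ρ 0 = [ρ 0] := by
  simp [BGame.bhist]

private lemma bhist_succ' {V : Type} (ρ : ℕ → V) (n : ℕ) :
    BGame.bhist ρ (n+1) = ρ (n+1) :: BGame.bhist ρ n := by
  unfold BGame.bhist
  rw [List.ofFn_succ']
  simp [Fin.last]

private lemma bhist_cons {V : Type} (ρ : ℕ → V) (n : ℕ) :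
    ∃ h, BGame.bhist ρ n = ρ n :: h := by
  cases n with
  | zero => exact ⟨[], bhist_zero' ρ⟩
  | succ m => exact ⟨_, bhist_succ' ρ m⟩

/-- Player 0's (forced) strategy in `H(T)`. -/
private def strH : List SubdivNode → SubdivNode
  | (Sum.inr (_, v)) :: _ => Sum.inl v
  | _ => Sum.inl none

private def Good (T : Set (List ℕ)) : SubdivNode → Prop
  | Sum.inl none => True
  | Sum.inl (some t) => t ∈ T
  | Sum.inr (u, v) => baseEdge T u v

private lemma reach_good (T : Set (List ℕ)) (hT : IsTree T) :
    ∀ l, BGame.ReachH (gameH T) strH l → ∀ v h, l = v :: h → Good T v := by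
  intro l hr
  induction hr with
  | base =>
    intro v h hvh
    obtain ⟨l0, hl0⟩ := hT.1
    injection hvh with h1 h2
    subst h1
    exact hT.2 l0 hl0 [] List.nil_prefix
  | @step0 v h hr hv ih =>
    intro v' h' hvh
    injection hvh with h1 h2
    subst h1
    obtain ⟨u, w, rfl⟩ := hv
    have hg : Good T (Sum.inr (u, w)) := ih _ _ rfl
    have hb : baseEdge T u w := hg
    show Good T (Sum.inl w)
    cases w with
    | none => trivial
    | some t' =>
      cases u with
      | none => exact (hb : False).elim
      | some t => exact hb.2.1
  | @step1 v w h hr hv hE ih =>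
    intro v' h' hvh
    injection hvh with h1 h2
    subst h1
    rcases hE with ⟨u, x, hx, hy, hb⟩ | ⟨u, x, hx, hy, hb⟩
    · subst hy; exact hb
    · exact absurd ⟨u, x, hx⟩ hv

/-- **Lemma.** Player 0 has a winning strategy in the Büchi game `H(T)` iff the
tree `T` contains no infinite branch. -/

theorem wins0_gameH_iff_not_infBranch (T : Set (List ℕ)) (hT : IsTree T) :
    BGame.Wins0 (gameH T) ↔ ¬ InfBranch T := by
  constructor
  · rintro ⟨str, hleg, hwin⟩ ⟨β, hβ⟩
    set ρ : ℕ → SubdivNode := fun n =>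
      if n % 2 = 0 then Sum.inl (some (Lb β (n/2)))
      else Sum.inr (some (Lb β (n/2)), some (Lb β (n/2 + 1))) with hρ
    have hev : ∀ m, ρ (2*m) = Sum.inl (some (Lb β m)) := by
      intro m
      have h0 : (2*m) % 2 = 0 := by omega
      have h1 : (2*m) / 2 = m := by omega
      simp [hρ, h0, h1]
    have hod : ∀ m, ρ (2*m+1) = Sum.inr (some (Lb β m), some (Lb β (m+1))) := by
      intro m
      have h0 : (2*m+1) % 2 = 1 := by omega
      have h1 : (2*m+1) / 2 = m := by omega
      simp [hρ, h0, h1]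
    have hedge : ∀ m, baseEdge T (some (Lb β m)) (some (Lb β (m+1))) :=
      fun m => ⟨hβ m, hβ (m+1), β m, Lb_succ β m⟩
    have hnotown : ∀ m, ρ (2*m) ∉ (gameH T).Own := by
      intro m hm
      rw [hev m] at hm
      obtain ⟨u, v, h⟩ := hm
      simp at h
    have hstep1 : ∀ m, (gameH T).E (ρ (2*m)) (ρ (2*m+1)) := by
      intro m
      rw [hev m, hod m]
      exact Or.inl ⟨_, _, rfl, rfl, hedge m⟩
    have key : ∀ n, BGame.ReachH (gameH T) str (BGame.bhist ρ n) ∧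
        ((ρ n ∈ (gameH T).Own ∧ ρ (n+1) = str (BGame.bhist ρ n)) ∨
         (ρ n ∉ (gameH T).Own ∧ (gameH T).E (ρ n) (ρ (n+1)))) := by
      intro n
      induction n with
      | zero =>
        refine ⟨?_, Or.inr ⟨hnotown 0, hstep1 0⟩⟩
        rw [bhist_zero']
        have h0 : ρ 0 = Sum.inl (some (Lb β 0)) := hev 0
        rw [h0]
        exact BGame.ReachH.base
      | succ n ih =>
        obtain ⟨hr, hc⟩ := ih
        obtain ⟨h, hh⟩ := bhist_cons ρ n
        have hrs : BGame.ReachH (gameH T) str (BGame.bhist ρ (n+1)) := by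
          rw [bhist_succ']
          rcases hc with ⟨hown, heq⟩ | ⟨hown, hE⟩
          · rw [hh] at hr heq ⊢
            rw [heq]
            exact BGame.ReachH.step0 hr hown
          · rw [hh] at hr ⊢
            exact BGame.ReachH.step1 hr hown hE
        refine ⟨hrs, ?_⟩
        rcases Nat.even_or_odd (n+1) with ⟨m, hm⟩ | ⟨m, hm⟩
        · have hm' : n + 1 = 2*m := by omega
          rw [hm']
          exact Or.inr ⟨hnotown m, hstep1 m⟩
        · have hm' : n + 1 = 2*m+1 := by omega
          have e1 : ρ (n+1) = Sum.inr (some (Lb β m), some (Lb β (m+1))) := by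
            rw [hm']; exact hod m
          have e2 : ρ (n+1+1) = Sum.inl (some (Lb β (m+1))) := by
            rw [show n+1+1 = 2*(m+1) by omega]; exact hev (m+1)
          have hown : ρ (n+1) ∈ (gameH T).Own := ⟨_, _, e1⟩
          left
          refine ⟨hown, ?_⟩
          obtain ⟨h', hh'⟩ := bhist_cons ρ (n+1)
          rw [hh'] at hrs
          have hE := hleg h' (ρ (n+1)) hrs hown
          rcases hE with ⟨u, v, hx, hy, hb⟩ | ⟨u, v, hx, hy, hb⟩
          · rw [e1] at hx; simp at hx
          · rw [e1] at hx
            injection hx with hx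
            injection hx with h1 h2
            rw [hh', hy, ← h2, e2]
    have hcons : (gameH T).Consistent str ρ := by
      refine ⟨?_, fun n => (key n).2⟩
      exact hev 0
    have hinf := hwin ρ hcons
    obtain ⟨n, hn⟩ := hinf.nonempty
    rcases Nat.even_or_odd n with ⟨m, hm⟩ | ⟨m, hm⟩
    · have hm' : n = 2*m := by omega
      subst hm'
      have hn' : ρ (2*m) ∈ (gameH T).FinSet := hn
      rw [hev m] at hn'
      simp [gameH] at hn'
    · have hm' : n = 2*m+1 := by omega
      subst hm'
      have hn' : ρ (2*m+1) ∈ (gameH T).FinSet := hn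
      rw [hod m] at hn'
      simp [gameH] at hn'
  · intro hnb
    refine ⟨strH, ?_, ?_⟩
    · intro h v hr hv
      obtain ⟨u, w, rfl⟩ := hv
      have hg : Good T (Sum.inr (u, w)) := reach_good T hT _ hr _ _ rfl
      exact Or.inr ⟨u, w, rfl, rfl, hg⟩
    · intro ρ hcons
      have key : ∀ n u, ρ (2*n) = Sum.inl u →
          ∃ v, baseEdge T u v ∧ ρ (2*n+1) = Sum.inr (u, v) ∧ ρ (2*n+2) = Sum.inl v := by
        intro n u hu
        rcases hcons.2 (2*n) with ⟨hown, _⟩ | ⟨_, hE⟩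
        · rw [hu] at hown
          obtain ⟨_, _, h⟩ := hown
          simp at h
        · rcases hE with ⟨u', v, hx, hy, hb⟩ | ⟨u', v, hx, hy, hb⟩
          · rw [hu] at hx
            injection hx with hx
            subst hx
            refine ⟨v, hb, hy, ?_⟩
            rcases hcons.2 (2*n+1) with ⟨hown, heq⟩ | ⟨hown, _⟩
            · obtain ⟨h', hh'⟩ := bhist_cons ρ (2*n+1)
              have heq' : ρ (2*n+2) = strH (BGame.bhist ρ (2*n+1)) := by
                rw [show 2*n+2 = 2*n+1+1 by omega]; exact heq
              rw [heq', hh', hy]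
              rfl
            · exact absurd ⟨_, _, hy⟩ hown
          · rw [hu] at hx
            simp at hx
      have hex : ∀ n, ∃ u, ρ (2*n) = Sum.inl u := by
        intro n
        induction n with
        | zero => exact ⟨some [], hcons.1⟩
        | succ n ih =>
          obtain ⟨u, hu⟩ := ih
          obtain ⟨v, _, _, h2⟩ := key n u hu
          exact ⟨v, by rw [show 2*(n+1) = 2*n+2 by ring]; exact h2⟩
      set u : ℕ → BaseNode := fun n => (hex n).choose with hudef
      have hu : ∀ n, ρ (2*n) = Sum.inl (u n) := fun n => (hex n).choose_spec
      have hstep : ∀ n, baseEdge T (u n) (u (n+1)) := by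
        intro n
        obtain ⟨v, hb, _, h2⟩ := key n (u n) (hu n)
        have h3 := hu (n+1)
        rw [show 2*(n+1) = 2*n+2 by ring, h2] at h3
        injection h3 with h3
        rw [h3] at hb
        exact hb
      have hu0 : u 0 = some [] := by
        have h1 := hu 0
        have h2 := hcons.1
        rw [h2] at h1
        injection h1 with h1
        exact h1.symm
      by_cases hnone : ∃ n, u n = none
      · obtain ⟨n, hn⟩ := hnone
        have hall : ∀ m, u (n+m) = none := by
          intro m
          induction m with
          | zero => exact hn
          | succ m ih =>
            have hb := hstep (n+m)
            rw [ih] at hb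
            cases h : u (n+m+1) with
            | none => rfl
            | some t =>
              rw [h] at hb
              simp only [baseEdge] at hb
        refine Set.infinite_of_injective_forall_mem
          (f := fun m : ℕ => 2*(n+m)) ?_ ?_
        · intro a b hab
          simp only at hab
          omega
        · intro m
          show ρ (2*(n+m)) ∈ (gameH T).FinSet
          rw [hu (n+m), hall m]
          exact Set.mem_insert _ _
      · push_neg at hnone
        have hsome : ∀ n, ∃ s, u n = some s := fun n =>
          Option.ne_none_iff_exists'.mp (hnone n)
        set t : ℕ → List ℕ := fun n => (hsome n).choose with htdef
        have hut : ∀ n, u n = some (t n) := fun n => (hsome n).choose_spec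
        have hstep' : ∀ n, t n ∈ T ∧ t (n+1) ∈ T ∧ ∃ m, t (n+1) = t n ++ [m] := by
          intro n
          have hb := hstep n
          rw [hut n, hut (n+1)] at hb
          exact hb
        set β : ℕ → ℕ := fun n => (hstep' n).2.2.choose with hβdef
        have hβs : ∀ n, t (n+1) = t n ++ [β n] := fun n => (hstep' n).2.2.choose_spec
        have ht0 : t 0 = [] := by
          have := hut 0
          rw [hu0] at this
          injection this with h
          exact h.symm
        have hteq : ∀ n, t n = Lb β n := by
          intro n
          induction n with
          | zero => rw [ht0]; rfl
          | succ n ih => rw [hβs n, ih, Lb_succ]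
        exact absurd ⟨β, fun n => by
          have := (hstep' n).1
          rw [hteq n] at this
          exact this⟩ hnb


end MultiBuffer
end
end
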